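/- arXiv:2510.19780 — 2 statements merged into one kernel-verified Lean document; each statement's English description precedes it below -/
import Mathlib

section
/- Let G = (V, E) be a weighted digraph with nonnegative weights satisfying Assumptions 1 and 2, let t be a positive integer, and for u, v ∈ V and i ∈ ℕ let d^i(u, v) denote the minimum weight of a path from u to v using at most 2^i edges (+∞ if no such path exists), and let N_t^i(u) denote the set consisting of the min(t + 1, number of v with d^i(u, v) < +∞) vertices v with smallest d^i(u, v) (so u ∈ N_t^i(u), since d^i(u, u) = 0). Fix u ∈ V and i ∈ ℕ, let N'(u) = ⋃_{v ∈ N_t^i(u)} N_t^i(v), and for y ∈ N'(u) let δ(y) = min { d^i(u, v) + d^i(v, y) : v ∈ N_t^i(u), y ∈ N_t^i(v) }. Then N_t^{i+1}(u) is exactly the set of the t + 1 vertices y ∈ N'(u) with smallest δ(y) (or all of N'(u), if |N'(u)| < t + 1), and moreover δ(y) = d^{i+1}(u, y) for every y ∈ N_t^{i+1}(u). -/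
/-- A path from `s` to `t` in the digraph with edge set `E`: a finite sequence of edges
in which the head of each edge equals the tail of the next, starting at `s`, ending at `t`
(the empty sequence is a path from `s` to `s`). Paths need not be simple. -/
inductive IsPath {V : Type*} (E : Set (V × V)) : V → V → List (V × V) → Prop
  | nil (s : V) : IsPath E s s []
  | cons {s u t : V} {P : List (V × V)} :
      (s, u) ∈ E → IsPath E u t P → IsPath E s t ((s, u) :: P)

/-- The weight of a path: the sum of its edge weights. -/
def pweight {V : Type*} (w : V × V → ℝ) (P : List (V × V)) : ℝ :=
  (P.map w).sum

/-- `distG E w u v` is the minimum weight of a path from `u` to `v`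
(`+∞` if there is no such path). -/
noncomputable def distG {V : Type*} (E : Set (V × V)) (w : V × V → ℝ) (u v : V) : EReal :=
  sInf {r : EReal | ∃ P : List (V × V), IsPath E u v P ∧ r = (pweight w P : EReal)}

/-- `v` is reachable from `u`. -/
def Reach {V : Type*} (E : Set (V × V)) (u v : V) : Prop :=
  ∃ P : List (V × V), IsPath E u v P

/-- Assumption 1: every proper (contiguous) subpath of a path has strictly smaller weight. -/
def Assumption1 {V : Type*} (E : Set (V × V)) (w : V × V → ℝ) : Prop :=
  ∀ (s t : V) (P : List (V × V)), IsPath E s t P →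
    ∀ A P' B : List (V × V), P = A ++ P' ++ B → A ++ B ≠ [] →
      pweight w P' < pweight w P

/-- Assumption 2: for a fixed origin `u`, no two paths from `u` to distinct
targets have equal weight. -/
def Assumption2 {V : Type*} (E : Set (V × V)) (w : V × V → ℝ) : Prop :=
  ∀ (u x y : V) (P₁ P₂ : List (V × V)), IsPath E u x P₁ → IsPath E u y P₂ → x ≠ y →
    pweight w P₁ ≠ pweight w P₂

/-- The edge set of the subgraph induced on the complement of `Z` (the graph `G − Z`). -/
def ERemove {V : Type*} (E : Set (V × V)) (Z : Set V) : Set (V × V) :=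
  {e ∈ E | e.1 ∉ Z ∧ e.2 ∉ Z}

/-- `N` is the set of the `t` vertices distinct from `s` that are nearest to `s`
with respect to `distG` (or all vertices other than `s` reachable from `s`, if fewer
than `t` of them are reachable). -/
def IsNearSet {V : Type*} (E : Set (V × V)) (w : V × V → ℝ) (s : V) (t : ℕ)
    (N : Finset V) : Prop :=
  s ∉ N ∧ (∀ x ∈ N, Reach E s x) ∧
  (∀ x ∈ N, ∀ y : V, y ∉ N → y ≠ s → Reach E s y → distG E w s x ≤ distG E w s y) ∧
  (N.card = t ∨ (N.card < t ∧ ∀ y : V, y ≠ s → Reach E s y → y ∈ N))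

/-- `(a, b)` belongs to `E_t(a)`, i.e. it is among the `t` smallest-weight
outgoing edges of `a`. -/
def InTopT {V : Type*} (E : Set (V × V)) (w : V × V → ℝ) (t : ℕ) (a b : V) : Prop :=
  (a, b) ∈ E ∧ {c : V | (a, c) ∈ E ∧ w (a, c) < w (a, b)}.ncard < t

/-- `(E', w')` is obtained from `(E, w)` by contracting `X` into `s`:
its vertices avoid `X`; it keeps every edge of `E` avoiding `X`, and has an edge `s → v`
whenever some `x ∈ X` has an edge `x → v` with `v ∉ X`; among the resulting parallel
edges only one of smallest weight (`w (s, v)` itself, or `distG s x + w (x, v)`) is kept. -/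
def IsContraction {V : Type*} (E : Set (V × V)) (w : V × V → ℝ) (s : V) (X : Set V)
    (E' : Set (V × V)) (w' : V × V → ℝ) : Prop :=
  (∀ u v : V, ((u, v) ∈ E' ↔
      (u ∉ X ∧ v ∉ X ∧ ((u, v) ∈ E ∨ (u = s ∧ ∃ x ∈ X, (x, v) ∈ E))))) ∧
  (∀ u v : V, (u, v) ∈ E' → u ≠ s → w' (u, v) = w (u, v)) ∧
  (∀ v : V, (s, v) ∈ E' →
      ((w' (s, v) : EReal) =
        sInf {r : EReal | ((s, v) ∈ E ∧ r = (w (s, v) : EReal)) ∨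
          ∃ x ∈ X, (x, v) ∈ E ∧ r = distG E w s x + (w (x, v) : EReal)}))

/-- `distHop E w k u v` is the minimum weight of a path from `u` to `v` using at most
`k` edges (`+∞` if no such path exists). -/
noncomputable def distHop {V : Type*} (E : Set (V × V)) (w : V × V → ℝ) (k : ℕ)
    (u v : V) : EReal :=
  sInf {r : EReal | ∃ P : List (V × V), IsPath E u v P ∧ P.length ≤ k ∧
    r = (pweight w P : EReal)}

/-- `N` is the set `N_t^{(k)}(u)` consisting of the `min(t + 1, #{v : distHop(u,v) < ∞})`
vertices `v` with smallest hop-constrained distance `distHop E w k u v`. -/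
def IsHopNear {V : Type*} (E : Set (V × V)) (w : V × V → ℝ) (k t : ℕ) (u : V)
    (N : Finset V) : Prop :=
  (∀ v ∈ N, distHop E w k u v ≠ ⊤) ∧
  (∀ x ∈ N, ∀ y : V, y ∉ N → distHop E w k u y ≠ ⊤ →
    distHop E w k u x ≤ distHop E w k u y) ∧
  N.card = min (t + 1) {v : V | distHop E w k u v ≠ ⊤}.ncard

section Aux

variable {V : Type*} {E : Set (V × V)} {w : V × V → ℝ}

lemma pweight_append (w : V × V → ℝ) (P Q : List (V × V)) :
    pweight w (P ++ Q) = pweight w P + pweight w Q := by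
  simp [pweight]

lemma isPath_append {s m : V} {P : List (V × V)} (h1 : IsPath E s m P) :
    ∀ {t : V} {Q : List (V × V)}, IsPath E m t Q → IsPath E s t (P ++ Q) := by
  induction h1 with
  | nil _ => intro t Q h2; exact h2
  | cons he _ ih => intro t Q h2; exact IsPath.cons he (ih h2)

lemma isPath_split {s t : V} {P : List (V × V)} (h : IsPath E s t P) (n : ℕ) :
    ∃ m, IsPath E s m (P.take n) ∧ IsPath E m t (P.drop n) := by
  induction h generalizing n with
  | nil s => exact ⟨s, by simpa using IsPath.nil s, by simpa using IsPath.nil s⟩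
  | cons he hp ih =>
    cases n with
    | zero => exact ⟨_, IsPath.nil _, IsPath.cons he hp⟩
    | succ n =>
      obtain ⟨m, h1, h2⟩ := ih n
      exact ⟨m, IsPath.cons he h1, h2⟩

lemma pweight_nonneg (hw : ∀ e ∈ E, 0 ≤ w e) {s t : V} {P : List (V × V)}
    (h : IsPath E s t P) : 0 ≤ pweight w P := by
  induction h with
  | nil _ => simp [pweight]
  | cons he _ ih =>
    have := hw _ he
    simp only [pweight, List.map_cons, List.sum_cons] at *
    linarith

lemma distHop_le {k : ℕ} {u v : V} {P : List (V × V)} (h : IsPath E u v P)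
    (hl : P.length ≤ k) : distHop E w k u v ≤ (pweight w P : EReal) :=
  sInf_le ⟨P, h, hl, rfl⟩

lemma distHop_nonneg (hw : ∀ e ∈ E, 0 ≤ w e) (k : ℕ) (u v : V) :
    (0 : EReal) ≤ distHop E w k u v := by
  apply le_sInf
  rintro r ⟨P, hP, -, rfl⟩
  exact_mod_cast pweight_nonneg hw hP

lemma distHop_ne_bot (hw : ∀ e ∈ E, 0 ≤ w e) (k : ℕ) (u v : V) :
    distHop E w k u v ≠ ⊥ := by
  intro hb
  have := distHop_nonneg (E := E) (w := w) hw k u v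
  rw [hb, le_bot_iff] at this
  exact absurd this (by norm_num)

lemma distHop_attained [Fintype V] {k : ℕ} {u v : V} (h : distHop E w k u v ≠ ⊤) :
    ∃ P, IsPath E u v P ∧ P.length ≤ k ∧ distHop E w k u v = (pweight w P : EReal) := by
  set S := {r : EReal | ∃ P : List (V × V), IsPath E u v P ∧ P.length ≤ k ∧
    r = (pweight w P : EReal)} with hSdef
  have hS : distHop E w k u v = sInf S := rfl
  have hfin : S.Finite := by
    have hsub : S ⊆ (fun P : List (V × V) => (pweight w P : EReal)) '' {l | l.length ≤ k} := by
      rintro r ⟨P, hP, hl, rfl⟩; exact ⟨P, hl, rfl⟩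
    exact ((List.finite_length_le (V × V) k).image _).subset hsub
  have hne : S.Nonempty := by
    by_contra hne
    rw [Set.not_nonempty_iff_eq_empty] at hne
    rw [hS, hne, sInf_empty] at h
    exact h rfl
  obtain ⟨P, hP, hl, hEq⟩ := hne.csInf_mem hfin
  exact ⟨P, hP, hl, hS.trans hEq⟩

lemma distHop_mono {k k' : ℕ} (hk : k ≤ k') (u v : V) :
    distHop E w k' u v ≤ distHop E w k u v := by
  apply sInf_le_sInf
  rintro r ⟨P, h1, h2, rfl⟩
  exact ⟨P, h1, h2.trans hk, rfl⟩

lemma distHop_triangle [Fintype V] (hw : ∀ e ∈ E, 0 ≤ w e) (k1 k2 : ℕ) (u v y : V) :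
    distHop E w (k1 + k2) u y ≤ distHop E w k1 u v + distHop E w k2 v y := by
  by_cases h1 : distHop E w k1 u v = ⊤
  · rw [h1, EReal.top_add_of_ne_bot (distHop_ne_bot hw k2 v y)]; exact le_top
  by_cases h2 : distHop E w k2 v y = ⊤
  · rw [h2, EReal.add_top_of_ne_bot (distHop_ne_bot hw k1 u v)]; exact le_top
  obtain ⟨P, hP, hPl, hPe⟩ := distHop_attained h1
  obtain ⟨Q, hQ, hQl, hQe⟩ := distHop_attained h2
  rw [hPe, hQe, ← EReal.coe_add, ← pweight_append]
  exact distHop_le (isPath_append hP hQ) (by simpa using Nat.add_le_add hPl hQl)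

lemma distHop_ne [Fintype V] (hA2 : Assumption2 E w) {k : ℕ} {u x y : V}
    (hx : distHop E w k u x ≠ ⊤) (hy : distHop E w k u y ≠ ⊤) (hxy : x ≠ y) :
    distHop E w k u x ≠ distHop E w k u y := by
  obtain ⟨P, hP, -, hPe⟩ := distHop_attained hx
  obtain ⟨Q, hQ, -, hQe⟩ := distHop_attained hy
  rw [hPe, hQe]
  exact fun h => hA2 u x y P Q hP hQ hxy (by exact_mod_cast h)

lemma hopNear_notMem [Fintype V] (hA2 : Assumption2 E w) {k t : ℕ} {v m : V}
    {Nv : Finset V} (hNv : IsHopNear E w k t v Nv) (hm : distHop E w k v m ≠ ⊤)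
    (hmNv : m ∉ Nv) :
    Nv.card = t + 1 ∧ ∀ x ∈ Nv, distHop E w k v x < distHop E w k v m := by
  obtain ⟨hfin, hle, hcard⟩ := hNv
  have hsub : (↑Nv : Set V) ⊆ {z | distHop E w k v z ≠ ⊤} := fun x hx => hfin x hx
  have hsfin : {z | distHop E w k v z ≠ ⊤}.Finite := Set.toFinite _
  have hcard' : Nv.card = t + 1 := by
    rcases le_or_gt {z | distHop E w k v z ≠ ⊤}.ncard (t + 1) with h | h
    · exfalso
      have hNc : Nv.card = {z | distHop E w k v z ≠ ⊤}.ncard := by omega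
      have heq : (↑Nv : Set V) = {z | distHop E w k v z ≠ ⊤} :=
        Set.eq_of_subset_of_ncard_le hsub (by rw [Set.ncard_coe_finset]; omega) hsfin
      exact hmNv (by rw [← Finset.mem_coe, heq]; exact hm)
    · omega
  refine ⟨hcard', fun x hx => ?_⟩
  have h1 : distHop E w k v x ≤ distHop E w k v m := hle x hx m hmNv hm
  have h2 : distHop E w k v x ≠ distHop E w k v m :=
    distHop_ne hA2 (hfin x hx) hm (fun h => hmNv (h ▸ hx))
  exact lt_of_le_of_ne h1 h2

lemma crowd {K t : ℕ} {u : V} {M : Finset V} (hM : IsHopNear E w K t u M)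
    {y : V} (hy : y ∈ M) (S : Finset V) (hScard : t + 1 ≤ S.card)
    (hS : ∀ x ∈ S, distHop E w K u x < distHop E w K u y) : False := by
  classical
  by_cases hsub : S ⊆ M
  · have hyS : y ∉ S := fun h => lt_irrefl _ (hS y h)
    have hins : insert y S ⊆ M := Finset.insert_subset hy hsub
    have h1 : t + 2 ≤ M.card :=
      le_trans (by rw [Finset.card_insert_of_notMem hyS]; omega) (Finset.card_le_card hins)
    have h2 := hM.2.2
    omega
  · obtain ⟨x, hxS, hxM⟩ := Finset.not_subset.1 hsub
    have hfin : distHop E w K u x ≠ ⊤ :=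
      ((hS x hxS).trans (lt_top_iff_ne_top.2 (hM.1 y hy))).ne
    exact absurd (hM.2.1 y hy x hxM hfin) (not_le.2 (hS x hxS))

end Aux

lemma stmt16_key {V : Type*} [Fintype V] {E : Set (V × V)} {w : V × V → ℝ}
    (hw : ∀ e ∈ E, 0 ≤ w e) (hA2 : Assumption2 E w) {t i : ℕ}
    {N : V → Finset V} (hN : ∀ v : V, IsHopNear E w (2 ^ i) t v (N v))
    {u : V} {M : Finset V} (hM : IsHopNear E w (2 ^ (i + 1)) t u M)
    {y : V} (hy : y ∈ M) :
    ∃ v, v ∈ N u ∧ y ∈ N v ∧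
      distHop E w (2 ^ i) u v + distHop E w (2 ^ i) v y
        = distHop E w (2 ^ (i + 1)) u y := by
  have hpow : 2 ^ (i + 1) = 2 ^ i + 2 ^ i := by ring
  have hmono : ∀ a b : V, distHop E w (2 ^ (i + 1)) a b ≤ distHop E w (2 ^ i) a b :=
    fun a b => distHop_mono (Nat.pow_le_pow_right (by norm_num) (Nat.le_succ i)) a b
  have hyfin : distHop E w (2 ^ (i + 1)) u y ≠ ⊤ := hM.1 y hy
  obtain ⟨P, hP, hPl, hPe⟩ := distHop_attained hyfin
  obtain ⟨m, hP1, hP2⟩ := isPath_split hP (2 ^ i)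
  have hP1l : (P.take (2 ^ i)).length ≤ 2 ^ i := by simp
  have hP2l : (P.drop (2 ^ i)).length ≤ 2 ^ i := by
    rw [hpow] at hPl
    simp only [List.length_drop]
    omega
  have hPsum : pweight w P = pweight w (P.take (2 ^ i)) + pweight w (P.drop (2 ^ i)) := by
    rw [← pweight_append]; simp
  have hd1 : distHop E w (2 ^ i) u m ≤ (pweight w (P.take (2 ^ i)) : EReal) :=
    distHop_le hP1 hP1l
  have hd2 : distHop E w (2 ^ i) m y ≤ (pweight w (P.drop (2 ^ i)) : EReal) :=
    distHop_le hP2 hP2l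
  have hd1fin : distHop E w (2 ^ i) u m ≠ ⊤ := ne_top_of_le_ne_top (EReal.coe_ne_top _) hd1
  have hd2fin : distHop E w (2 ^ i) m y ≠ ⊤ := ne_top_of_le_ne_top (EReal.coe_ne_top _) hd2
  have hsum_le : distHop E w (2 ^ i) u m + distHop E w (2 ^ i) m y
      ≤ distHop E w (2 ^ (i + 1)) u y := by
    calc distHop E w (2 ^ i) u m + distHop E w (2 ^ i) m y
        ≤ (pweight w (P.take (2 ^ i)) : EReal) + (pweight w (P.drop (2 ^ i)) : EReal) :=
          add_le_add hd1 hd2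
      _ = (pweight w P : EReal) := by rw [← EReal.coe_add, ← hPsum]
      _ = distHop E w (2 ^ (i + 1)) u y := hPe.symm
  have hmNu : m ∈ N u := by
    by_contra hm
    obtain ⟨hcard, hstrict⟩ := hopNear_notMem hA2 (hN u) hd1fin hm
    refine crowd hM hy (N u) (by omega) ?_
    intro x hx
    calc distHop E w (2 ^ (i + 1)) u x ≤ distHop E w (2 ^ i) u x := hmono u x
      _ < distHop E w (2 ^ i) u m := hstrict x hx
      _ ≤ (pweight w (P.take (2 ^ i)) : EReal) := hd1
      _ ≤ (pweight w P : EReal) := by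
          rw [hPsum]
          exact_mod_cast le_add_of_nonneg_right (pweight_nonneg hw hP2)
      _ = distHop E w (2 ^ (i + 1)) u y := hPe.symm
  have hyNm : y ∈ N m := by
    by_contra hym
    obtain ⟨hcard, hstrict⟩ := hopNear_notMem hA2 (hN m) hd2fin hym
    refine crowd hM hy (N m) (by omega) ?_
    intro z hz
    have h1 : distHop E w (2 ^ i) m z < distHop E w (2 ^ i) m y := hstrict z hz
    have h3 : distHop E w (2 ^ (i + 1)) u z
        ≤ distHop E w (2 ^ i) u m + distHop E w (2 ^ i) m z := by
      rw [hpow]; exact distHop_triangle hw _ _ _ _ _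
    have h4 : distHop E w (2 ^ i) u m + distHop E w (2 ^ i) m z
        < distHop E w (2 ^ i) u m + distHop E w (2 ^ i) m y := by
      have := EReal.add_lt_add_of_lt_of_le h1 (le_refl (distHop E w (2 ^ i) u m))
        (distHop_ne_bot hw _ _ _) hd1fin
      rwa [add_comm (distHop E w (2 ^ i) m z), add_comm (distHop E w (2 ^ i) m y)] at this
    have h5 : distHop E w (2 ^ i) u m + distHop E w (2 ^ i) m y
        ≤ distHop E w (2 ^ (i + 1)) u y := hsum_le
    exact lt_of_le_of_lt h3 (lt_of_lt_of_le h4 h5)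
  refine ⟨m, hmNu, hyNm, le_antisymm hsum_le ?_⟩
  rw [hpow]
  exact distHop_triangle hw _ _ _ _ _


/-- One squaring step of the hop-constrained nearest-vertices computation: if
`N v = N_t^i(v)` for all `v`, `NU = ⋃_{v ∈ N u} N_t^i(v)` and
`δ(y) = min {d^i(u,v) + d^i(v,y) : v ∈ N_t^i(u), y ∈ N_t^i(v)}`, then `N_t^{i+1}(u)`
is exactly the set of the `t + 1` vertices `y ∈ NU` with smallest `δ(y)` (or all of
`NU` if `|NU| < t + 1`), and `δ(y) = d^{i+1}(u, y)` for every `y ∈ N_t^{i+1}(u)`. -/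
theorem stmt16 {V : Type*} [Fintype V]
    (E : Set (V × V)) (w : V × V → ℝ)
    (hw : ∀ e ∈ E, 0 ≤ w e)
    (hA1 : Assumption1 E w) (hA2 : Assumption2 E w)
    (t : ℕ) (ht : 0 < t)
    (i : ℕ) (N : V → Finset V)
    (hN : ∀ v : V, IsHopNear E w (2 ^ i) t v (N v))
    (u : V)
    (NU : Set V) (hNU : NU = {y : V | ∃ v ∈ N u, y ∈ N v})
    (δ : V → EReal)
    (hδ : ∀ y : V, δ y = sInf {r : EReal | ∃ v : V, v ∈ N u ∧ y ∈ N v ∧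
      r = distHop E w (2 ^ i) u v + distHop E w (2 ^ i) v y})
    (M : Finset V) (hM : IsHopNear E w (2 ^ (i + 1)) t u M) :
    (↑M : Set V) ⊆ NU ∧
    M.card = min (t + 1) NU.ncard ∧
    (∀ x ∈ M, ∀ y ∈ NU, y ∉ M → δ x ≤ δ y) ∧
    (∀ y ∈ M, δ y = distHop E w (2 ^ (i + 1)) u y) := by
  have hpow : 2 ^ (i + 1) = 2 ^ i + 2 ^ i := by ring
  have hδge : ∀ y : V, distHop E w (2 ^ (i + 1)) u y ≤ δ y := by
    intro y
    rw [hδ y]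
    apply le_sInf
    rintro r ⟨v, hv, hyv, rfl⟩
    rw [hpow]
    exact distHop_triangle hw _ _ _ _ _
  have hC4 : ∀ y ∈ M, δ y = distHop E w (2 ^ (i + 1)) u y := by
    intro y hy
    obtain ⟨v, hv, hyv, heq⟩ := stmt16_key hw hA2 hN hM hy
    refine le_antisymm ?_ (hδge y)
    rw [hδ y]
    exact sInf_le ⟨v, hv, hyv, heq.symm⟩
  have hC1 : (↑M : Set V) ⊆ NU := by
    intro y hy
    obtain ⟨v, hv, hyv, -⟩ := stmt16_key hw hA2 hN hM hy
    rw [hNU]; exact ⟨v, hv, hyv⟩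
  have hNUfin : ∀ y ∈ NU, distHop E w (2 ^ (i + 1)) u y ≠ ⊤ := by
    intro y hy
    rw [hNU] at hy
    obtain ⟨v, hv, hyv⟩ := hy
    have h1 : distHop E w (2 ^ i) u v ≠ ⊤ := (hN u).1 v hv
    have h2 : distHop E w (2 ^ i) v y ≠ ⊤ := (hN v).1 y hyv
    have h3 := distHop_triangle (E := E) hw (2 ^ i) (2 ^ i) u v y
    rw [← hpow] at h3
    exact ne_top_of_le_ne_top (EReal.add_lt_top h1 h2).ne h3
  refine ⟨hC1, ?_, ?_, hC4⟩
  · have hsub2 : NU ⊆ {z | distHop E w (2 ^ (i + 1)) u z ≠ ⊤} := fun y hy => hNUfin y hy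
    have h1 : M.card = min (t + 1) {z | distHop E w (2 ^ (i + 1)) u z ≠ ⊤}.ncard := hM.2.2
    have h2 : NU.ncard ≤ {z | distHop E w (2 ^ (i + 1)) u z ≠ ⊤}.ncard :=
      Set.ncard_le_ncard hsub2 (Set.toFinite _)
    have h3 : M.card ≤ NU.ncard := by
      rw [← Set.ncard_coe_finset]
      exact Set.ncard_le_ncard hC1 (Set.toFinite _)
    omega
  · intro x hx y hyNU hyM
    have h2 : distHop E w (2 ^ (i + 1)) u x ≤ distHop E w (2 ^ (i + 1)) u y :=
      hM.2.1 x hx y hyM (hNUfin y hyNU)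
    rw [hC4 x hx]
    exact le_trans h2 (hδge y)
end

section
/- Let G = (V, E) be a weighted digraph with nonnegative weights satisfying Assumptions 1 and 2, with source s having no incoming edges, and let t be a positive integer. Define G_1 = G and, as long as G_i has a vertex other than s, let G_{i+1} be the graph obtained from G_i by contracting Near_t(s) (computed in G_i) into s. Then for every i and every vertex v of G_i, dist_{G_i}(s, v) = dist_G(s, v); in particular, the iterative discover-and-contract scheme records the correct distance from s to every vertex of G. -/
section Paths

variable {V : Type*} {E : Set (V × V)} {w : V × V → ℝ}

lemma IsPath.snoc {a u v : V} {P : List (V × V)} (hP : IsPath E a u P) (he : (u, v) ∈ E) :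
    IsPath E a v (P ++ [(u, v)]) := by
  induction hP with
  | nil => exact .cons he (.nil v)
  | cons he' _ ih => exact .cons he' (ih he)

lemma IsPath.eq_nil_of_forall_notMem {a b : V} {P : List (V × V)} (hP : IsPath E a b P)
    (hb : ∀ u : V, (u, b) ∉ E) : P = [] := by
  induction hP with
  | nil => rfl
  | cons he hP ih =>
    obtain rfl := ih hb
    cases hP
    exact absurd he (hb _)

lemma distG_le_pweight {a b : V} {P : List (V × V)} (hP : IsPath E a b P) :
    distG E w a b ≤ pweight w P :=
  sInf_le ⟨P, hP, rfl⟩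

lemma distG_self_nonpos (a : V) : distG E w a a ≤ 0 := by
  simpa [pweight] using distG_le_pweight (w := w) (IsPath.nil (E := E) a)

lemma distG_le_weight {u v : V} (he : (u, v) ∈ E) : distG E w u v ≤ w (u, v) := by
  simpa [pweight] using distG_le_pweight (w := w) (IsPath.cons he (.nil v))

lemma distG_self_eq_zero_of_forall_notMem {s : V} (hs : ∀ u : V, (u, s) ∉ E) :
    distG E w s s = 0 := by
  refine le_antisymm (distG_self_nonpos s) (le_sInf ?_)
  rintro _ ⟨P, hP, rfl⟩
  simp [hP.eq_nil_of_forall_notMem hs, pweight]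

lemma distG_le_distG_add_weight {s x v : V} (he : (x, v) ∈ E) :
    distG E w s v ≤ distG E w s x + w (x, v) := by
  rw [← EReal.sub_le_iff_le_add (.inl (EReal.coe_ne_bot _)) (.inl (EReal.coe_ne_top _))]
  refine le_sInf ?_
  rintro _ ⟨P, hP, rfl⟩
  rw [EReal.sub_le_iff_le_add (.inl (EReal.coe_ne_bot _)) (.inl (EReal.coe_ne_top _))]
  calc distG E w s v ≤ pweight w (P ++ [(x, v)]) := distG_le_pweight (hP.snoc he)
    _ = (pweight w P : EReal) + w (x, v) := by simp [pweight]

lemma le_add_pweight_of_potential (f : V → EReal)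
    (hf : ∀ u v : V, (u, v) ∈ E → f v ≤ f u + w (u, v))
    {a b : V} {P : List (V × V)} (hP : IsPath E a b P) : f b ≤ f a + pweight w P := by
  induction hP with
  | nil => simp [pweight]
  | @cons a u b P he _ ih =>
    calc f b ≤ f u + pweight w P := ih
      _ ≤ f a + w (a, u) + pweight w P := add_le_add_left (hf a u he) _
      _ = f a + pweight w ((a, u) :: P) := by simp [pweight, add_assoc]

lemma le_distG_of_potential (f : V → EReal) {s : V} (hs : f s ≤ 0)
    (hf : ∀ u v : V, (u, v) ∈ E → f v ≤ f u + w (u, v)) (v : V) : f v ≤ distG E w s v := by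
  refine le_sInf ?_
  rintro _ ⟨P, hP, rfl⟩
  calc f v ≤ f s + pweight w P := le_add_pweight_of_potential f hf hP
    _ ≤ pweight w P := by simpa using add_le_add_left hs (pweight w P : EReal)

end Paths

namespace IsContraction

variable {V : Type*} {E E' : Set (V × V)} {w w' : V × V → ℝ} {s : V} {X : Set V}

lemma notMem_into_source (hc : IsContraction E w s X E' w') (hs : ∀ u : V, (u, s) ∉ E) :
    ∀ u : V, (u, s) ∉ E' := by
  intro u h
  rcases ((hc.1 u s).mp h).2.2 with h | ⟨-, x, -, hx⟩
  exacts [hs u h, hs x hx]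

lemma weight_le (hc : IsContraction E w s X E' w') {u v : V} (he : (u, v) ∈ E)
    (he' : (u, v) ∈ E') : w' (u, v) ≤ w (u, v) := by
  by_cases hu : u = s
  · subst hu
    have : (w' (u, v) : EReal) ≤ w (u, v) := by
      rw [hc.2.2 v he']
      exact sInf_le (.inl ⟨he, rfl⟩)
    exact_mod_cast this
  · exact (hc.2.1 u v he' hu).le

lemma weight_source_le (hc : IsContraction E w s X E' w') {x v : V} (hx : x ∈ X)
    (he : (x, v) ∈ E) (he' : (s, v) ∈ E') : (w' (s, v) : EReal) ≤ distG E w s x + w (x, v) := by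
  rw [hc.2.2 v he']
  exact sInf_le (.inr ⟨x, hx, he, rfl⟩)

lemma distG_le_weight_source (hc : IsContraction E w s X E' w') {v : V} (he' : (s, v) ∈ E') :
    distG E w s v ≤ w' (s, v) := by
  rw [hc.2.2 v he']
  refine le_sInf ?_
  rintro _ (⟨he, rfl⟩ | ⟨x, -, he, rfl⟩)
  exacts [distG_le_weight he, distG_le_distG_add_weight he]

lemma distG_le_distG_contracted (hc : IsContraction E w s X E' w') (hs : ∀ u : V, (u, s) ∉ E) (v : V) :
    distG E w s v ≤ distG E' w' s v := by
  refine le_distG_of_potential _ (distG_self_nonpos s) (fun u v he' => ?_) v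
  by_cases hu : u = s
  · subst hu
    simpa [distG_self_eq_zero_of_forall_notMem hs] using hc.distG_le_weight_source he'
  · have he : (u, v) ∈ E := ((hc.1 u v).mp he').2.2.resolve_right (fun h => hu h.1)
    rw [hc.2.1 u v he' hu]
    exact distG_le_distG_add_weight he

lemma distG_contracted_le_distG (hc : IsContraction E w s X E' w') (hs : ∀ u : V, (u, s) ∉ E)
    (hsX : s ∉ X) {v : V} (hv : v ∉ X) : distG E' w' s v ≤ distG E w s v := by
  classical
  -- a potential for `E` only because `dist_E ≤ dist_E'` everywhere
  let f : V → EReal := fun y => if y ∈ X then distG E w s y else distG E' w' s y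
  have hf_ge : ∀ y, distG E w s y ≤ f y := fun y => by
    by_cases hy : y ∈ X <;> simp [f, hy, hc.distG_le_distG_contracted hs y]
  suffices ∀ u y : V, (u, y) ∈ E → f y ≤ f u + w (u, y) by
    simpa [f, hv] using le_distG_of_potential f (by simpa [f, hsX] using distG_self_nonpos s) this v
  intro u y he
  by_cases hy : y ∈ X
  · simp only [f, hy, if_true]
    exact (distG_le_distG_add_weight he).trans (add_le_add_left (hf_ge u) _)
  by_cases hu : u ∈ X
  · have he' : (s, y) ∈ E' := (hc.1 s y).mpr ⟨hsX, hy, .inr ⟨rfl, u, hu, he⟩⟩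
    simp only [f, hy, hu, if_true, if_false]
    calc distG E' w' s y ≤ w' (s, y) := distG_le_weight he'
      _ ≤ distG E w s u + w (u, y) := hc.weight_source_le hu he he'
  · have he' : (u, y) ∈ E' := (hc.1 u y).mpr ⟨hu, hy, .inl he⟩
    simp only [f, hy, hu, if_false]
    calc distG E' w' s y ≤ distG E' w' s u + w' (u, y) := distG_le_distG_add_weight he'
      _ ≤ distG E' w' s u + w (u, y) := add_le_add_right (by exact_mod_cast hc.weight_le he he') _

lemma distG_contracted_eq (hc : IsContraction E w s X E' w') (hs : ∀ u : V, (u, s) ∉ E)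
    (hsX : s ∉ X) {v : V} (hv : v ∉ X) : distG E' w' s v = distG E w s v :=
  (hc.distG_contracted_le_distG hs hsX hv).antisymm (hc.distG_le_distG_contracted hs v)

end IsContraction

theorem stmt18_general {V : Type*}
    (E₀ : Set (V × V)) (w₀ : V × V → ℝ)
    (s : V) (hs : ∀ u : V, (u, s) ∉ E₀)
    (t : ℕ)
    (Es : ℕ → Set (V × V)) (ws : ℕ → V × V → ℝ) (Vs : ℕ → Set V) (Ns : ℕ → Finset V)
    (h0E : Es 0 = E₀) (h0w : ws 0 = w₀)
    (hstep : ∀ i : ℕ, Vs i ≠ {s} →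
      IsNearSet (Es i) (ws i) s t (Ns i) ∧
      IsContraction (Es i) (ws i) s (↑(Ns i) : Set V) (Es (i + 1)) (ws (i + 1)) ∧
      Vs (i + 1) = Vs i \ (↑(Ns i) : Set V)) :
    ∀ i : ℕ, (∀ j < i, Vs j ≠ {s}) →
      ∀ v ∈ Vs i, distG (Es i) (ws i) s v = distG E₀ w₀ s v := by
  subst h0E h0w
  suffices ∀ i : ℕ, (∀ j < i, Vs j ≠ {s}) →
      (∀ u : V, (u, s) ∉ Es i) ∧ ∀ v ∈ Vs i, distG (Es i) (ws i) s v = distG (Es 0) (ws 0) s v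
    from fun i hi => (this i hi).2
  intro i
  induction i with
  | zero => exact fun _ => ⟨hs, fun _ _ => rfl⟩
  | succ i ih =>
    intro hne
    obtain ⟨hs_i, hdist_i⟩ := ih fun j hj => hne j (by omega)
    obtain ⟨⟨hsN, -⟩, hc, hV⟩ := hstep i (hne i (by omega))
    refine ⟨hc.notMem_into_source hs_i, fun v hv => ?_⟩
    rw [hV] at hv
    rw [hc.distG_contracted_eq hs_i (by simpa using hsN) hv.2, hdist_i v hv.1]

/-- Iterative discover-and-contract scheme: starting from `G₁ = G` and, as long as the
current graph has a vertex other than `s`, obtaining `G_{i+1}` from `G_i` by contracting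
`Near_t(s)` (computed in `G_i`) into `s`, every vertex `v` of `G_i` satisfies
`dist_{G_i}(s, v) = dist_G(s, v)`; in particular the scheme records the correct
distance from `s` to every vertex of `G`. -/
theorem stmt18 {V : Type*} [Fintype V]
    (E₀ : Set (V × V)) (w₀ : V × V → ℝ)
    (hw : ∀ e ∈ E₀, 0 ≤ w₀ e)
    (hA1 : Assumption1 E₀ w₀) (hA2 : Assumption2 E₀ w₀)
    (s : V) (hs : ∀ u : V, (u, s) ∉ E₀)
    (t : ℕ) (ht : 0 < t)
    (Es : ℕ → Set (V × V)) (ws : ℕ → V × V → ℝ) (Vs : ℕ → Set V) (Ns : ℕ → Finset V)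
    (h0E : Es 0 = E₀) (h0w : ws 0 = w₀) (h0V : Vs 0 = Set.univ)
    (hstep : ∀ i : ℕ, Vs i ≠ {s} →
      IsNearSet (Es i) (ws i) s t (Ns i) ∧
      IsContraction (Es i) (ws i) s (↑(Ns i) : Set V) (Es (i + 1)) (ws (i + 1)) ∧
      Vs (i + 1) = Vs i \ (↑(Ns i) : Set V)) :
    ∀ i : ℕ, (∀ j < i, Vs j ≠ {s}) →
      ∀ v ∈ Vs i, distG (Es i) (ws i) s v = distG E₀ w₀ s v :=
  stmt18_general E₀ w₀ s hs t Es ws Vs Ns h0E h0w hstep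
end
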